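/- arXiv:gr-qc/9702008 — 2 statements merged into one kernel-verified Lean document; each statement's English description precedes it below -/
import Mathlib

section
/- Let n ≥ 1, let N be a Hermitian positive definite n×n complex matrix, let N¹, N², N³ be Hermitian n×n complex matrices, and let I₀ be a Hermitian positive semidefinite n×n complex matrix. Assume Condition (3): for every μ ∈ ℂ and every n̂ ∈ ℝ³ with |n̂| = 1, the only vector ψ ∈ ℂⁿ satisfying I₀ψ = 0 and (μN + i·N(n̂))ψ = 0 is ψ = 0. Then there exists δ > 0 such that for every k ∈ ℤ³ with k ≠ 0 and every λ ∈ ℂ for which there exists φ ∈ ℂⁿ, φ ≠ 0, with λNφ = (i·N(k) − I₀)φ, one has Re λ ≤ −δ. -/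
open Matrix
open scoped ComplexOrder

/-- `N(k) = k₁N¹ + k₂N² + k₃N³` for a real covector `k`. -/
noncomputable def symbolR {n : ℕ} (N1 N2 N3 : Matrix (Fin n) (Fin n) ℂ)
    (k : Fin 3 → ℝ) : Matrix (Fin n) (Fin n) ℂ :=
  (k 0 : ℂ) • N1 + (k 1 : ℂ) • N2 + (k 2 : ℂ) • N3

/-- `N(k)` for an integer covector `k`. -/
noncomputable def symbolZ {n : ℕ} (N1 N2 N3 : Matrix (Fin n) (Fin n) ℂ)
    (k : Fin 3 → ℤ) : Matrix (Fin n) (Fin n) ℂ :=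
  (k 0 : ℂ) • N1 + (k 1 : ℂ) • N2 + (k 2 : ℂ) • N3

/-!
Pairing `λ N φ = (i N(k) - I₀) φ` with `φ` gives `Re λ = -(φ* I₀ φ) / (φ* N φ)`, so it suffices to
bound this ratio below. Dividing the equation by `|k|` shows that `(k / |k|, 1 / |k|, φ)`, with `φ`
normalized, is an eigen-triple of `i N(nh) - ε I₀` relative to `N` with `|nh| = 1`, `ε ∈ [0, 1]`.
These triples form a compact set on which the ratio is continuous, and it is positive there by
Condition (3); hence it has a positive minimum `δ`.
-/

section Rayleigh

variable {ι : Type*} [Fintype ι]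

noncomputable def rayleigh (M N : Matrix ι ι ℂ) (φ : ι → ℂ) : ℂ :=
  (star φ ⬝ᵥ M *ᵥ φ) / (star φ ⬝ᵥ N *ᵥ φ)

lemma eq_rayleigh_of_smul_mulVec_eq {M N : Matrix ι ι ℂ} {φ : ι → ℂ} {μ : ℂ}
    (hφ : star φ ⬝ᵥ N *ᵥ φ ≠ 0) (h : μ • (N *ᵥ φ) = M *ᵥ φ) : μ = rayleigh M N φ := by
  rw [rayleigh, eq_div_iff hφ, ← h, dotProduct_smul, smul_eq_mul]

lemma re_mul_re_eq_neg_of_smul_mulVec_eq {N H P : Matrix ι ι ℂ} (hN : N.IsHermitian)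
    (hH : H.IsHermitian) {φ : ι → ℂ} {μ : ℂ}
    (h : μ • (N *ᵥ φ) = (Complex.I • H - P) *ᵥ φ) :
    μ.re * (star φ ⬝ᵥ N *ᵥ φ).re = -(star φ ⬝ᵥ P *ᵥ φ).re := by
  have hNim : (star φ ⬝ᵥ N *ᵥ φ).im = 0 := hN.im_star_dotProduct_mulVec_self φ
  have hHim : (star φ ⬝ᵥ H *ᵥ φ).im = 0 := hH.im_star_dotProduct_mulVec_self φ
  have := congrArg (fun v => (star φ ⬝ᵥ v).re) h
  simpa [sub_mulVec, smul_mulVec, dotProduct_sub, dotProduct_smul, Complex.mul_re, hNim, hHim]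
    using this

lemma Matrix.PosDef.re_star_dotProduct_mulVec_pos {N : Matrix ι ι ℂ} (hN : N.PosDef)
    {φ : ι → ℂ} (hφ : φ ≠ 0) : 0 < (star φ ⬝ᵥ N *ᵥ φ).re :=
  (Complex.lt_def.mp (hN.dotProduct_mulVec_pos hφ)).1

lemma exists_norm_eq_one_smul_mulVec_eq {M N : Matrix ι ι ℂ} {φ : ι → ℂ} {μ : ℂ}
    (hφ : φ ≠ 0) (h : μ • (N *ᵥ φ) = M *ᵥ φ) :
    ∃ ψ : ι → ℂ, ‖ψ‖ = 1 ∧ μ • (N *ᵥ ψ) = M *ᵥ ψ :=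
  ⟨(‖φ‖⁻¹ : ℂ) • φ, norm_smul_inv_norm hφ, by rw [mulVec_smul, mulVec_smul, smul_comm, h]⟩

end Rayleigh

lemma ne_zero_of_norm_eq_one {E : Type*} [NormedAddCommGroup E] {x : E} (hx : ‖x‖ = 1) :
    x ≠ 0 := fun h => by simp [h] at hx

lemma one_le_norm_toLp_intCast {ι : Type*} [Fintype ι] {k : ι → ℤ} (hk : k ≠ 0) :
    1 ≤ ‖WithLp.toLp 2 (fun i => (k i : ℝ))‖ := by
  obtain ⟨i, hi⟩ := Function.ne_iff.mp hk
  calc (1 : ℝ) ≤ |(k i : ℝ)| := by exact_mod_cast Int.one_le_abs hi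
    _ ≤ _ := PiLp.norm_apply_le (WithLp.toLp 2 (fun i => (k i : ℝ))) i

lemma isHermitian_symbolZ {n : ℕ} {N1 N2 N3 : Matrix (Fin n) (Fin n) ℂ} (hN1 : N1.IsHermitian)
    (hN2 : N2.IsHermitian) (hN3 : N3.IsHermitian) (k : Fin 3 → ℤ) :
    (symbolZ N1 N2 N3 k).IsHermitian := by
  have hk (i : Fin 3) : IsSelfAdjoint (k i : ℂ) := .intCast (k i)
  exact ((hN1.smul (hk 0)).add (hN2.smul (hk 1))).add (hN3.smul (hk 2))

section Symbol

variable {n : ℕ} (N N1 N2 N3 I0 : Matrix (Fin n) (Fin n) ℂ)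

/-- Condition (3). -/
def SymbolInjectiveOnKernel : Prop :=
  ∀ (μ : ℂ) (nh : EuclideanSpace ℝ (Fin 3)), ‖nh‖ = 1 →
    ∀ ψ : Fin n → ℂ, I0 *ᵥ ψ = 0 → (μ • N + Complex.I • symbolR N1 N2 N3 nh) *ᵥ ψ = 0 → ψ = 0

/-- At `nh = k / |k|`, `ε = 1 / |k|` this is `(i N(k) - I₀) / |k|`; `ε = 0` is the
high-frequency limit. -/
noncomputable def dampedSymbol (nh : EuclideanSpace ℝ (Fin 3)) (ε : ℝ) :
    Matrix (Fin n) (Fin n) ℂ :=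
  Complex.I • symbolR N1 N2 N3 nh - (ε : ℂ) • I0

lemma dampedSymbol_smul_toLp_intCast (c : ℝ) (k : Fin 3 → ℤ) :
    dampedSymbol N1 N2 N3 I0 (c • WithLp.toLp 2 (fun i => (k i : ℝ))) c =
      (c : ℂ) • (Complex.I • symbolZ N1 N2 N3 k - I0) := by
  simp only [dampedSymbol, symbolR, symbolZ, WithLp.ofLp_smul, Pi.smul_apply, smul_eq_mul,
    Complex.ofReal_mul, Complex.ofReal_intCast, mul_smul, smul_add, smul_sub]
  module

/-- Normalized eigenvectors of `N⁻¹ (dampedSymbol nh ε)`. An eigenvalue is necessarily the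
Rayleigh quotient; writing it that way makes the set visibly closed. -/
def eigenLocus : Set (EuclideanSpace ℝ (Fin 3) × ℝ × (Fin n → ℂ)) :=
  Metric.sphere 0 1 ×ˢ Set.Icc 0 1 ×ˢ Metric.sphere 0 1 ∩
    {x | rayleigh (dampedSymbol N1 N2 N3 I0 x.1 x.2.1) N x.2.2 • (N *ᵥ x.2.2) =
      dampedSymbol N1 N2 N3 I0 x.1 x.2.1 *ᵥ x.2.2}

variable {N N1 N2 N3 I0}

lemma isCompact_eigenLocus (hN : N.PosDef) : IsCompact (eigenLocus N N1 N2 N3 I0) := by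
  set S : Set (EuclideanSpace ℝ (Fin 3) × ℝ × (Fin n → ℂ)) :=
    Metric.sphere 0 1 ×ˢ Set.Icc 0 1 ×ˢ Metric.sphere 0 1
  have hS : IsCompact S := (isCompact_sphere _ _).prod (isCompact_Icc.prod (isCompact_sphere _ _))
  have hden : ∀ x ∈ S, star x.2.2 ⬝ᵥ N *ᵥ x.2.2 ≠ 0 := fun x hx h =>
    (hN.re_star_dotProduct_mulVec_pos
      (ne_zero_of_norm_eq_one (mem_sphere_zero_iff_norm.mp hx.2.2))).ne' (by simp [h])
  have hcont : ContinuousOn (fun x : EuclideanSpace ℝ (Fin 3) × ℝ × (Fin n → ℂ) =>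
      rayleigh (dampedSymbol N1 N2 N3 I0 x.1 x.2.1) N x.2.2 • (N *ᵥ x.2.2) -
        dampedSymbol N1 N2 N3 I0 x.1 x.2.1 *ᵥ x.2.2) S := by
    simp only [rayleigh, dampedSymbol, symbolR]
    exact ((ContinuousOn.div (by fun_prop) (by fun_prop) hden).smul (by fun_prop)).sub
      (by fun_prop)
  refine hS.of_isClosed_subset ?_ Set.inter_subset_left
  unfold eigenLocus
  convert hcont.preimage_isClosed_of_isClosed hS.isClosed (isClosed_singleton (x := 0)) using 2
  ext x
  exact sub_eq_zero.symm

lemma mem_eigenLocus_of_smul_mulVec_eq (hN : N.PosDef) {nh : EuclideanSpace ℝ (Fin 3)} {ε : ℝ}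
    {φ : Fin n → ℂ} {μ : ℂ} (hnh : ‖nh‖ = 1) (hε : ε ∈ Set.Icc 0 1) (hφ : ‖φ‖ = 1)
    (h : μ • (N *ᵥ φ) = dampedSymbol N1 N2 N3 I0 nh ε *ᵥ φ) :
    (nh, ε, φ) ∈ eigenLocus N N1 N2 N3 I0 := by
  refine ⟨⟨mem_sphere_zero_iff_norm.mpr hnh, hε, mem_sphere_zero_iff_norm.mpr hφ⟩, ?_⟩
  have hden : star φ ⬝ᵥ N *ᵥ φ ≠ 0 := fun h0 =>
    (hN.re_star_dotProduct_mulVec_pos (ne_zero_of_norm_eq_one hφ)).ne' (by simp [h0])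
  show rayleigh _ N φ • (N *ᵥ φ) = _
  rwa [← eq_rayleigh_of_smul_mulVec_eq hden h]

/-- If `φ* I₀ φ = 0` then `I₀ φ = 0`, so `φ` is an eigenvector of `i N(nh)` lying in the kernel
of `I₀`, which Condition (3) excludes; compactness makes the positive ratio uniformly positive. -/
lemma exists_pos_le_div_on_eigenLocus (hN : N.PosDef) (hI0 : I0.PosSemidef)
    (hcond : SymbolInjectiveOnKernel N N1 N2 N3 I0) :
    ∃ δ > (0 : ℝ), ∀ x ∈ eigenLocus N N1 N2 N3 I0,
      δ ≤ (star x.2.2 ⬝ᵥ I0 *ᵥ x.2.2).re / (star x.2.2 ⬝ᵥ N *ᵥ x.2.2).re := by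
  refine (isCompact_eigenLocus hN).exists_forall_le' ?_ ?_
  · refine ContinuousOn.div (by fun_prop) (by fun_prop) fun x hx => ?_
    exact (hN.re_star_dotProduct_mulVec_pos
      (ne_zero_of_norm_eq_one (mem_sphere_zero_iff_norm.mp hx.1.2.2))).ne'
  rintro ⟨nh, ε, φ⟩ ⟨⟨hnh, -, hφ⟩, heq⟩
  have hφ0 : φ ≠ 0 := ne_zero_of_norm_eq_one (mem_sphere_zero_iff_norm.mp hφ)
  refine div_pos ?_ (hN.re_star_dotProduct_mulVec_pos hφ0)
  obtain ⟨hre, him⟩ := Complex.le_def.mp (hI0.dotProduct_mulVec_nonneg φ)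
  refine lt_of_le_of_ne hre fun hre0 => hφ0 ?_
  have hI0φ : I0 *ᵥ φ = 0 :=
    (hI0.dotProduct_mulVec_zero_iff φ).mp (Complex.ext hre0.symm him.symm)
  refine hcond (-rayleigh (dampedSymbol N1 N2 N3 I0 nh ε) N φ) nh
    (mem_sphere_zero_iff_norm.mp hnh) φ hI0φ ?_
  have hsymb : dampedSymbol N1 N2 N3 I0 nh ε *ᵥ φ = Complex.I • (symbolR N1 N2 N3 nh *ᵥ φ) := by
    rw [dampedSymbol, sub_mulVec, smul_mulVec, smul_mulVec, hI0φ, smul_zero, sub_zero]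
  change _ = dampedSymbol N1 N2 N3 I0 nh ε *ᵥ φ at heq
  rw [add_mulVec, smul_mulVec, smul_mulVec, neg_smul, heq, hsymb, neg_add_cancel]

end Symbol

theorem eigenvalues_re_le_neg_delta_general
    (n : ℕ)
    (N N1 N2 N3 I0 : Matrix (Fin n) (Fin n) ℂ)
    (hN : N.PosDef)
    (hN1 : N1.IsHermitian) (hN2 : N2.IsHermitian) (hN3 : N3.IsHermitian)
    (hI0 : I0.PosSemidef)
    (hcond3 : ∀ (μ : ℂ) (nh : EuclideanSpace ℝ (Fin 3)), ‖nh‖ = 1 →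
      ∀ ψ : Fin n → ℂ, I0 *ᵥ ψ = 0 →
        (μ • N + Complex.I • symbolR N1 N2 N3 nh) *ᵥ ψ = 0 → ψ = 0) :
    ∃ δ > (0 : ℝ), ∀ (k : Fin 3 → ℤ), k ≠ 0 → ∀ lam : ℂ,
      (∃ φ : Fin n → ℂ, φ ≠ 0 ∧
        lam • (N *ᵥ φ) = (Complex.I • symbolZ N1 N2 N3 k - I0) *ᵥ φ) →
      lam.re ≤ -δ := by
  obtain ⟨δ, hδ, hbound⟩ := exists_pos_le_div_on_eigenLocus hN hI0 hcond3
  refine ⟨δ, hδ, fun k hk lam ⟨φ, hφ0, hφ⟩ => ?_⟩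
  obtain ⟨ψ, hψ1, hψ⟩ := exists_norm_eq_one_smul_mulVec_eq hφ0 hφ
  set K : EuclideanSpace ℝ (Fin 3) := WithLp.toLp 2 (fun i => (k i : ℝ))
  have hK : 1 ≤ ‖K‖ := one_le_norm_toLp_intCast hk
  have hmem : (‖K‖⁻¹ • K, ‖K‖⁻¹, ψ) ∈ eigenLocus N N1 N2 N3 I0 := by
    refine mem_eigenLocus_of_smul_mulVec_eq hN (μ := (‖K‖⁻¹ : ℂ) * lam)
      (norm_smul_inv_norm (ne_zero_of_norm_ne_zero (zero_lt_one.trans_le hK).ne'))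
      ⟨by positivity, inv_le_one_of_one_le₀ hK⟩ hψ1 ?_
    rw [dampedSymbol_smul_toLp_intCast, smul_mulVec, ← hψ, mul_smul, Complex.ofReal_inv]
  have hre := re_mul_re_eq_neg_of_smul_mulVec_eq hN.1 (isHermitian_symbolZ hN1 hN2 hN3 k) hψ
  have ha := hN.re_star_dotProduct_mulVec_pos (ne_zero_of_norm_eq_one hψ1)
  have hδa := (le_div_iff₀ ha).mp (hbound _ hmem)
  nlinarith

/-- The eigenvalues of the symbol `i N(k) - I₀` (relative to the positive definite
symmetrizer `N`) have real parts uniformly bounded away from zero for all nonzero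
integer frequencies `k`, provided Condition (3) holds. -/
theorem eigenvalues_re_le_neg_delta
    (n : ℕ) (hn : 1 ≤ n)
    (N N1 N2 N3 I0 : Matrix (Fin n) (Fin n) ℂ)
    (hN : N.PosDef)
    (hN1 : N1.IsHermitian) (hN2 : N2.IsHermitian) (hN3 : N3.IsHermitian)
    (hI0 : I0.PosSemidef)
    (hcond3 : ∀ (μ : ℂ) (nh : EuclideanSpace ℝ (Fin 3)), ‖nh‖ = 1 →
      ∀ ψ : Fin n → ℂ, I0 *ᵥ ψ = 0 →
        (μ • N + Complex.I • symbolR N1 N2 N3 nh) *ᵥ ψ = 0 → ψ = 0) :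
    ∃ δ > (0 : ℝ), ∀ (k : Fin 3 → ℤ), k ≠ 0 → ∀ lam : ℂ,
      (∃ φ : Fin n → ℂ, φ ≠ 0 ∧
        lam • (N *ᵥ φ) = (Complex.I • symbolZ N1 N2 N3 k - I0) *ᵥ φ) →
      lam.re ≤ -δ :=
  eigenvalues_re_le_neg_delta_general n N N1 N2 N3 I0 hN hN1 hN2 hN3 hI0 hcond3
end

section
/- Let n ≥ 1, let N be a Hermitian positive definite n×n complex matrix, let N¹, N², N³ be Hermitian n×n complex matrices, and let I₀ be a Hermitian positive semidefinite n×n complex matrix. Assume Condition (3): for every μ ∈ ℂ and every n̂ ∈ ℝ³ with |n̂| = 1, the only vector ψ ∈ ℂⁿ satisfying I₀ψ = 0 and (μN + i·N(n̂))ψ = 0 is ψ = 0. Then there exists c' > 0 with the following property: for every k ∈ ℝ³ with |k| ≥ 1, every λ ∈ ℂ and every φ ∈ ℂⁿ with φ ≠ 0 satisfying λNφ = (i·N(k) − I₀)φ, if φ = ψ + η is the decomposition of φ with ψ the orthogonal projection of φ onto the kernel of I₀ and η in the orthogonal complement of the kernel of I₀, then ⟨ψ, Nψ⟩ ≤ c'·⟨η,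 Nη⟩. -/
open Matrix
open scoped ComplexOrder

/-!
Rescale the symbol: with `n̂ = k / |k|` and `μ = -λ / |k|`, the eigenvalue equation reads
`(μN + iN(n̂))φ = |k|⁻¹ I₀φ = |k|⁻¹ I₀η`, so `‖(μN + iN(n̂))ψ‖ ≲ ‖η‖`. Pairing the equation with `φ`
gives `|λ| ≲ |k|`, so `(μ, n̂)` stays in a compact set, on which Condition (3) and compactness of
the unit sphere of `ker I₀` give a uniform bound `δ‖ψ‖ ≤ ‖(μN + iN(n̂))ψ‖`. Hence `‖ψ‖ ≲ ‖η‖`,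
and positive definiteness of `N` turns this into the inequality between the quadratic forms.
-/

open scoped InnerProductSpace
open Metric

section Compactness

variable {𝕜 : Type*} [RCLike 𝕜]

theorem exists_pos_mul_norm_le_norm_apply {X E F : Type*} [TopologicalSpace X]
    [NormedAddCommGroup E] [NormedSpace 𝕜 E] [FiniteDimensional 𝕜 E]
    [NormedAddCommGroup F] [NormedSpace 𝕜 F] {K : Set X} (hK : IsCompact K)
    {T : X → E →L[𝕜] F} (hT : Continuous T) (V : Submodule 𝕜 E)
    (hinj : ∀ x ∈ K, ∀ v ∈ V, T x v = 0 → v = 0) :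
    ∃ δ > 0, ∀ x ∈ K, ∀ v ∈ V, δ * ‖v‖ ≤ ‖T x v‖ := by
  have := FiniteDimensional.proper_rclike 𝕜 E
  have hS : IsCompact (K ×ˢ ((V : Set E) ∩ sphere 0 1)) :=
    hK.prod ((isCompact_sphere 0 1).inter_left V.closed_of_finiteDimensional)
  have hcont : Continuous fun p : X × E => ‖T p.1 p.2‖ :=
    ((hT.comp continuous_fst).clm_apply continuous_snd).norm
  obtain ⟨δ, hδ, hmin⟩ := hS.exists_forall_le' hcont.continuousOn (a := 0) fun p hp => by
    obtain ⟨hx, hv, hv1⟩ := hp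
    refine norm_pos_iff.2 fun h => ?_
    simp [hinj _ hx _ hv h] at hv1
  refine ⟨δ, hδ, fun x hx v hv => ?_⟩
  rcases eq_or_ne v 0 with rfl | hv0
  · simp
  have hnv : 0 < ‖v‖ := norm_pos_iff.2 hv0
  have hunit : ((‖v‖⁻¹ : ℝ) : 𝕜) • v ∈ (V : Set E) ∩ sphere 0 1 := by
    refine ⟨V.smul_mem _ hv, ?_⟩
    simp [norm_smul, hnv.ne']
  have := hmin (x, _) ⟨hx, hunit⟩
  dsimp only at this
  rw [map_smul, norm_smul, RCLike.norm_ofReal, abs_of_pos (inv_pos.2 hnv)] at this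
  rwa [inv_mul_eq_div, le_div_iff₀ hnv] at this

open RCLike in
theorem exists_pos_mul_sq_norm_le_re_inner {E : Type*} [NormedAddCommGroup E]
    [InnerProductSpace 𝕜 E] [FiniteDimensional 𝕜 E] {N : E →L[𝕜] E}
    (hN : ∀ v ≠ 0, 0 < re ⟪v, N v⟫_𝕜) : ∃ a > 0, ∀ v, a * ‖v‖ ^ 2 ≤ re ⟪v, N v⟫_𝕜 := by
  have := FiniteDimensional.proper_rclike 𝕜 E
  have hcont : Continuous fun v => re ⟪v, N v⟫_𝕜 :=
    continuous_re.comp (continuous_id.inner N.continuous)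
  obtain ⟨a, ha, hmin⟩ := (isCompact_sphere (0 : E) 1).exists_forall_le' hcont.continuousOn
    (a := 0) fun v hv => hN v (ne_zero_of_mem_unit_sphere ⟨v, hv⟩)
  refine ⟨a, ha, fun v => ?_⟩
  rcases eq_or_ne v 0 with rfl | hv0
  · simp
  have hnv : 0 < ‖v‖ := norm_pos_iff.2 hv0
  have hu : ((‖v‖⁻¹ : ℝ) : 𝕜) • v ∈ sphere (0 : E) 1 := by
    simp [norm_smul, hnv.ne']
  have := hmin _ hu
  simp only [map_smul, inner_smul_left, inner_smul_right, conj_ofReal, ← mul_assoc,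
    ← ofReal_mul, re_ofReal_mul] at this
  rwa [← mul_inv, ← sq, ← div_eq_inv_mul, le_div_iff₀ (by positivity)] at this

end Compactness

section Symbol

open Complex

variable {E W : Type*} [NormedAddCommGroup E] [NormedSpace ℂ E]
  [NormedAddCommGroup W] [NormedSpace ℝ W] {N I0 : E →L[ℂ] E} {A : W →L[ℝ] E →L[ℂ] E}

theorem rescaled_symbol_apply_of_eigen {k : W} (hk : ‖k‖ ≠ 0) {lam : ℂ} {φ : E}
    (heig : lam • N φ = (I • A k - I0) φ) :
    (-(lam / ‖k‖) • N + I • A (‖k‖⁻¹ • k)) φ = ((‖k‖⁻¹ : ℝ) : ℂ) • I0 φ := by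
  have hk' : (‖k‖ : ℂ) ≠ 0 := by exact_mod_cast hk
  rw [map_smul, RCLike.real_smul_eq_coe_smul (K := ℂ)]
  simp only [_root_.add_apply, _root_.smul_apply, _root_.sub_apply] at heig ⊢
  rw [ofReal_inv]
  linear_combination (norm := (field_simp; module)) (-(‖k‖ : ℂ)⁻¹) • heig

theorem exists_pos_mul_norm_le_symbol_apply [FiniteDimensional ℂ E] [FiniteDimensional ℝ W]
    (hcond : ∀ (μ : ℂ) (w : W), ‖w‖ = 1 → ∀ ψ, I0 ψ = 0 → (μ • N + I • A w) ψ = 0 → ψ = 0)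
    (R : ℝ) :
    ∃ δ > 0, ∀ μ : ℂ, ‖μ‖ ≤ R → ∀ w : W, ‖w‖ = 1 → ∀ ψ, I0 ψ = 0 →
      δ * ‖ψ‖ ≤ ‖(μ • N + I • A w) ψ‖ := by
  have := FiniteDimensional.proper_rclike ℝ W
  obtain ⟨δ, hδ, h⟩ := exists_pos_mul_norm_le_norm_apply
    ((isCompact_closedBall (0 : ℂ) R).prod (isCompact_sphere (0 : W) 1))
    (T := fun p => p.1 • N + I • A p.2) (by fun_prop) (LinearMap.ker (I0 : E →ₗ[ℂ] E))
    fun p hp ψ hψ => hcond p.1 p.2 (mem_sphere_zero_iff_norm.1 hp.2) ψ hψ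
  exact ⟨δ, hδ, fun μ hμ w hw ψ hψ =>
    h (μ, w) ⟨mem_closedBall_zero_iff.2 hμ, mem_sphere_zero_iff_norm.2 hw⟩ ψ hψ⟩

theorem mul_norm_le_mul_norm_of_eigen {R δ : ℝ}
    (hδ : ∀ μ : ℂ, ‖μ‖ ≤ R → ∀ w : W, ‖w‖ = 1 → ∀ ψ, I0 ψ = 0 →
      δ * ‖ψ‖ ≤ ‖(μ • N + I • A w) ψ‖)
    {k : W} (hk : 1 ≤ ‖k‖) {lam : ℂ} (hlam : ‖lam‖ ≤ R * ‖k‖) {φ ψ η : E}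
    (heig : lam • N φ = (I • A k - I0) φ) (hsum : φ = ψ + η) (hψ : I0 ψ = 0) :
    δ * ‖ψ‖ ≤ (‖I0‖ + R * ‖N‖ + ‖A‖) * ‖η‖ := by
  have hk0 : 0 < ‖k‖ := one_pos.trans_le hk
  set M := -(lam / ‖k‖) • N + I • A (‖k‖⁻¹ • k)
  have hμ : ‖-(lam / ‖k‖)‖ ≤ R := by
    rw [norm_neg, norm_div, norm_real, Real.norm_of_nonneg hk0.le, div_le_iff₀ hk0]
    exact hlam
  have hw : ‖‖k‖⁻¹ • k‖ = 1 := norm_smul_inv_norm (norm_pos_iff.1 hk0)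
  have hM : ‖M‖ ≤ R * ‖N‖ + ‖A‖ := calc
    ‖M‖ ≤ ‖-(lam / ‖k‖)‖ * ‖N‖ + ‖A‖ * ‖‖k‖⁻¹ • k‖ := by
      refine (norm_add_le _ _).trans (add_le_add (norm_smul _ _).le ?_)
      rw [norm_smul, norm_I, one_mul]
      exact A.le_opNorm _
    _ ≤ R * ‖N‖ + ‖A‖ := by rw [hw, mul_one]; gcongr
  have hMψ : M ψ = ((‖k‖⁻¹ : ℝ) : ℂ) • I0 η - M η := by
    rw [eq_sub_iff_add_eq, ← map_add, ← hsum, rescaled_symbol_apply_of_eigen hk0.ne' heig,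
      hsum, map_add, hψ, zero_add]
  have hI0η : ‖((‖k‖⁻¹ : ℝ) : ℂ) • I0 η‖ ≤ ‖I0‖ * ‖η‖ := by
    rw [norm_smul, norm_real, Real.norm_of_nonneg (by positivity)]
    exact (mul_le_of_le_one_left (norm_nonneg _) (inv_le_one_of_one_le₀ hk)).trans
      (I0.le_opNorm η)
  calc δ * ‖ψ‖ ≤ ‖M ψ‖ := hδ _ hμ _ hw ψ hψ
    _ ≤ ‖I0‖ * ‖η‖ + ‖M‖ * ‖η‖ := by
      rw [hMψ]
      exact (norm_sub_le _ _).trans (add_le_add hI0η (M.le_opNorm η))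
    _ ≤ (‖I0‖ + R * ‖N‖ + ‖A‖) * ‖η‖ := by
      rw [add_assoc, add_mul]
      gcongr

end Symbol

section QuadraticForm

open Complex

variable {E W : Type*} [NormedAddCommGroup E] [InnerProductSpace ℂ E]
  [NormedAddCommGroup W] [NormedSpace ℝ W] {N I0 : E →L[ℂ] E} {A : W →L[ℝ] E →L[ℂ] E}

theorem norm_eigenvalue_mul_le {a : ℝ} (hcoer : ∀ v, a * ‖v‖ ^ 2 ≤ (⟪v, N v⟫_ℂ).re) {k : W}
    {lam : ℂ} {φ : E} (hφ : φ ≠ 0) (heig : lam • N φ = (I • A k - I0) φ) :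
    ‖lam‖ * a ≤ ‖A‖ * ‖k‖ + ‖I0‖ := by
  have hB : ‖I • A k - I0‖ ≤ ‖A‖ * ‖k‖ + ‖I0‖ := by
    refine (norm_sub_le _ _).trans (add_le_add_left ?_ _)
    rw [norm_smul, norm_I, one_mul]
    exact A.le_opNorm k
  have hφ2 : 0 < ‖φ‖ ^ 2 := by positivity
  refine le_of_mul_le_mul_right ?_ hφ2
  calc ‖lam‖ * a * ‖φ‖ ^ 2 ≤ ‖lam‖ * ‖⟪φ, N φ⟫_ℂ‖ := by
        rw [mul_assoc]
        exact mul_le_mul_of_nonneg_left ((hcoer φ).trans (re_le_norm _)) (norm_nonneg _)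
    _ = ‖⟪φ, (I • A k - I0) φ⟫_ℂ‖ := by rw [← heig, inner_smul_right, norm_mul]
    _ ≤ ‖φ‖ * (‖I • A k - I0‖ * ‖φ‖) :=
        (norm_inner_le_norm _ _).trans (mul_le_mul_of_nonneg_left
          ((I • A k - I0).le_opNorm φ) (norm_nonneg _))
    _ ≤ ‖φ‖ * ((‖A‖ * ‖k‖ + ‖I0‖) * ‖φ‖) := by gcongr
    _ = (‖A‖ * ‖k‖ + ‖I0‖) * ‖φ‖ ^ 2 := by ring

theorem re_inner_le_mul_re_inner {a K c : ℝ} (ha : 0 < a)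
    (hcoer : ∀ v, a * ‖v‖ ^ 2 ≤ (⟪v, N v⟫_ℂ).re) {ψ η : E} (hψη : ‖ψ‖ ≤ K * ‖η‖)
    (hc : ‖N‖ * K ^ 2 ≤ c * a) : (⟪ψ, N ψ⟫_ℂ).re ≤ c * (⟪η, N η⟫_ℂ).re := by
  have hc0 : 0 ≤ c := nonneg_of_mul_nonneg_left ((by positivity : 0 ≤ ‖N‖ * K ^ 2).trans hc) ha
  have hsq : ‖ψ‖ ^ 2 ≤ K ^ 2 * ‖η‖ ^ 2 := by
    rw [← mul_pow]; exact pow_le_pow_left₀ (norm_nonneg _) hψη 2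
  calc (⟪ψ, N ψ⟫_ℂ).re ≤ ‖ψ‖ * (‖N‖ * ‖ψ‖) := (re_le_norm _).trans
        ((norm_inner_le_norm _ _).trans (mul_le_mul_of_nonneg_left (N.le_opNorm ψ) (norm_nonneg _)))
    _ = ‖N‖ * ‖ψ‖ ^ 2 := by ring
    _ ≤ ‖N‖ * K ^ 2 * ‖η‖ ^ 2 := by rw [mul_assoc]; gcongr
    _ ≤ c * (a * ‖η‖ ^ 2) := by rw [← mul_assoc]; gcongr
    _ ≤ c * (⟪η, N η⟫_ℂ).re := mul_le_mul_of_nonneg_left (hcoer η) hc0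

theorem exists_re_inner_le_mul_re_inner_of_eigen [FiniteDimensional ℂ E] [FiniteDimensional ℝ W]
    (hN : ∀ v ≠ 0, 0 < (⟪v, N v⟫_ℂ).re)
    (hcond : ∀ (μ : ℂ) (w : W), ‖w‖ = 1 → ∀ ψ, I0 ψ = 0 → (μ • N + I • A w) ψ = 0 → ψ = 0) :
    ∃ c > 0, ∀ k : W, 1 ≤ ‖k‖ → ∀ (lam : ℂ) (φ ψ η : E), φ ≠ 0 →
      lam • N φ = (I • A k - I0) φ → φ = ψ + η → I0 ψ = 0 →
      (⟪ψ, N ψ⟫_ℂ).re ≤ c * (⟪η, N η⟫_ℂ).re := by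
  obtain ⟨a, ha, hcoer⟩ := exists_pos_mul_sq_norm_le_re_inner (𝕜 := ℂ) hN
  set R := (‖A‖ + ‖I0‖) / a
  obtain ⟨δ, hδ, hδbound⟩ := exists_pos_mul_norm_le_symbol_apply hcond R
  set K := (‖I0‖ + R * ‖N‖ + ‖A‖) / δ
  refine ⟨(‖N‖ * K ^ 2 + 1) / a, by positivity, fun k hk lam φ ψ η hφ heig hsum hψ => ?_⟩
  have hlam : ‖lam‖ ≤ R * ‖k‖ := by
    rw [div_mul_eq_mul_div, le_div_iff₀ ha]
    nlinarith [norm_eigenvalue_mul_le hcoer hφ heig, norm_nonneg A, norm_nonneg I0]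
  have hψη : ‖ψ‖ ≤ K * ‖η‖ := by
    rw [div_mul_eq_mul_div, le_div_iff₀ hδ, mul_comm]
    exact mul_norm_le_mul_norm_of_eigen hδbound hk hlam heig hsum hψ
  exact re_inner_le_mul_re_inner ha hcoer hψη (by rw [div_mul_cancel₀ _ ha.ne']; linarith)

end QuadraticForm

section Matrix

open Complex WithLp

variable {n : ℕ}

theorem inner_toEuclideanCLM_eq_star_dotProduct (M : Matrix (Fin n) (Fin n) ℂ)
    (x y : EuclideanSpace ℂ (Fin n)) :
    ⟪x, toEuclideanCLM (𝕜 := ℂ) M y⟫_ℂ = star (ofLp x) ⬝ᵥ (M *ᵥ ofLp y) := by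
  rw [EuclideanSpace.inner_eq_star_dotProduct, ofLp_toEuclideanCLM, dotProduct_comm]

theorem toEuclideanCLM_apply_eq_zero_iff (M : Matrix (Fin n) (Fin n) ℂ)
    (x : EuclideanSpace ℂ (Fin n)) : toEuclideanCLM (𝕜 := ℂ) M x = 0 ↔ M *ᵥ ofLp x = 0 :=
  (ofLp_eq_zero 2).symm

theorem symbolR_add (N1 N2 N3 : Matrix (Fin n) (Fin n) ℂ) (k k' : Fin 3 → ℝ) :
    symbolR N1 N2 N3 (k + k') = symbolR N1 N2 N3 k + symbolR N1 N2 N3 k' := by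
  simp only [symbolR, Pi.add_apply, ofReal_add, add_smul]
  abel

theorem symbolR_smul (N1 N2 N3 : Matrix (Fin n) (Fin n) ℂ) (r : ℝ) (k : Fin 3 → ℝ) :
    symbolR N1 N2 N3 (r • k) = (r : ℂ) • symbolR N1 N2 N3 k := by
  simp only [symbolR, Pi.smul_apply, smul_eq_mul, ofReal_mul, mul_smul, smul_add]

noncomputable def symbolCLM (N1 N2 N3 : Matrix (Fin n) (Fin n) ℂ) :
    EuclideanSpace ℝ (Fin 3) →L[ℝ] EuclideanSpace ℂ (Fin n) →L[ℂ] EuclideanSpace ℂ (Fin n) :=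
  LinearMap.toContinuousLinearMap
    { toFun := fun k => toEuclideanCLM (𝕜 := ℂ) (symbolR N1 N2 N3 k)
      map_add' := fun k k' => by rw [ofLp_add, symbolR_add, map_add]
      map_smul' := fun r k => by
        rw [ofLp_smul, symbolR_smul, map_smul, RingHom.id_apply,
          RCLike.real_smul_eq_coe_smul (K := ℂ)]
        rfl }

theorem symbolCLM_apply (N1 N2 N3 : Matrix (Fin n) (Fin n) ℂ)
    (k : EuclideanSpace ℝ (Fin 3)) :
    symbolCLM N1 N2 N3 k = toEuclideanCLM (𝕜 := ℂ) (symbolR N1 N2 N3 k) := rfl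

end Matrix

theorem equilibrium_part_controlled_general
    (n : ℕ)
    (N N1 N2 N3 I0 : Matrix (Fin n) (Fin n) ℂ)
    (hN : N.PosDef)
    (hcond3 : ∀ (μ : ℂ) (nh : EuclideanSpace ℝ (Fin 3)), ‖nh‖ = 1 →
      ∀ ψ : Fin n → ℂ, I0 *ᵥ ψ = 0 →
        (μ • N + Complex.I • symbolR N1 N2 N3 nh) *ᵥ ψ = 0 → ψ = 0) :
    ∃ c' > (0 : ℝ), ∀ (k : EuclideanSpace ℝ (Fin 3)), 1 ≤ ‖k‖ →
      ∀ (lam : ℂ) (φ ψ η : Fin n → ℂ), φ ≠ 0 →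
      lam • (N *ᵥ φ) = (Complex.I • symbolR N1 N2 N3 k - I0) *ᵥ φ →
      φ = ψ + η →
      I0 *ᵥ ψ = 0 →
      (∀ χ : Fin n → ℂ, I0 *ᵥ χ = 0 → star χ ⬝ᵥ η = 0) →
      (star ψ ⬝ᵥ (N *ᵥ ψ)).re ≤ c' * (star η ⬝ᵥ (N *ᵥ η)).re := by
  obtain ⟨c, hc, H⟩ := exists_re_inner_le_mul_re_inner_of_eigen
    (N := toEuclideanCLM (𝕜 := ℂ) N) (I0 := toEuclideanCLM (𝕜 := ℂ) I0) (A := symbolCLM N1 N2 N3)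
    (fun v hv => by
      rw [inner_toEuclideanCLM_eq_star_dotProduct]
      exact hN.re_dotProduct_pos (by simpa using hv))
    (fun μ w hw ψ hψ h => by
      rw [symbolCLM_apply, ← map_smul, ← map_smul, ← map_add,
        toEuclideanCLM_apply_eq_zero_iff] at h
      rw [toEuclideanCLM_apply_eq_zero_iff] at hψ
      simpa using hcond3 μ w hw _ hψ h)
  refine ⟨c, hc, fun k hk lam φ ψ η hφ heig hsum hψ _ => ?_⟩
  have heig' : lam • toEuclideanCLM (𝕜 := ℂ) N (WithLp.toLp 2 φ)
      = (Complex.I • symbolCLM N1 N2 N3 k - toEuclideanCLM (𝕜 := ℂ) I0) (WithLp.toLp 2 φ) := by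
    simpa [symbolCLM_apply, ← map_smul, ← map_sub, toEuclideanCLM_toLp] using
      congrArg (WithLp.toLp 2) heig
  simpa only [inner_toEuclideanCLM_eq_star_dotProduct] using
    H k hk lam (WithLp.toLp 2 φ) (WithLp.toLp 2 ψ) (WithLp.toLp 2 η) (by simpa using hφ) heig'
      (congrArg (WithLp.toLp 2) hsum) ((toEuclideanCLM_apply_eq_zero_iff _ _).2 hψ)

/-- Inequality (ievp): under Condition (3), the momentary-equilibrium part `ψ`
(orthogonal projection onto `ker I₀`) of any eigenvector `φ` of the symbol at a
frequency `|k| ≥ 1` is uniformly controlled by its non-equilibrium part `η`. -/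
theorem equilibrium_part_controlled
    (n : ℕ) (hn : 1 ≤ n)
    (N N1 N2 N3 I0 : Matrix (Fin n) (Fin n) ℂ)
    (hN : N.PosDef)
    (hN1 : N1.IsHermitian) (hN2 : N2.IsHermitian) (hN3 : N3.IsHermitian)
    (hI0 : I0.PosSemidef)
    (hcond3 : ∀ (μ : ℂ) (nh : EuclideanSpace ℝ (Fin 3)), ‖nh‖ = 1 →
      ∀ ψ : Fin n → ℂ, I0 *ᵥ ψ = 0 →
        (μ • N + Complex.I • symbolR N1 N2 N3 nh) *ᵥ ψ = 0 → ψ = 0) :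
    ∃ c' > (0 : ℝ), ∀ (k : EuclideanSpace ℝ (Fin 3)), 1 ≤ ‖k‖ →
      ∀ (lam : ℂ) (φ ψ η : Fin n → ℂ), φ ≠ 0 →
      lam • (N *ᵥ φ) = (Complex.I • symbolR N1 N2 N3 k - I0) *ᵥ φ →
      φ = ψ + η →
      I0 *ᵥ ψ = 0 →
      (∀ χ : Fin n → ℂ, I0 *ᵥ χ = 0 → star χ ⬝ᵥ η = 0) →
      (star ψ ⬝ᵥ (N *ᵥ ψ)).re ≤ c' * (star η ⬝ᵥ (N *ᵥ η)).re :=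
  equilibrium_part_controlled_general n N N1 N2 N3 I0 hN hcond3
end
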